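/- arXiv:0705.0192 — 2 statements merged into one kernel-verified Lean document; each statement's English description precedes it below -/
import Mathlib

section
/- The Hardy-type operator T : L_p(I) → L_q(I), (Tf)(x) = v(x)∫_a^x f(t)u(t)dt, is a compact operator. -/
/-!
Write `(Tf)(x) = v(x) φₓ(f)` with `φₓ(f) = ∫ 1_{(a,x]} u f`. By Hölder `φₓ` is a functional on
`L_p` of norm at most `‖1_{(a,x]} u‖_{p'}`, and by absolute continuity of the `L_{p'}` norm of `u`
the map `x ↦ φₓ` is continuous into the dual of `L_p`. Hence `f ↦ (x ↦ φₓ(f))` maps the unit ball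
of `L_p` to a bounded equicontinuous family in `C[a,b]`, which is relatively compact by
Arzelà–Ascoli, and multiplication by `v ∈ L_q` is bounded from `C[a,b]` to `L_q`.
-/

open MeasureTheory Set

/-- The Hardy-type operator `(Tf)(x) = v(x) ∫_a^x f(t) u(t) dt`. -/
noncomputable def hardyT (u v : ℝ → ℝ) (a : ℝ) (f : ℝ → ℝ) : ℝ → ℝ :=
  fun x => v x * ∫ t in a..x, f t * u t

/-- The adjoint-type operator `(T*f)(x) = u(x) ∫_x^b v(y) f(y) dy`. -/
noncomputable def hardyTstar (u v : ℝ → ℝ) (b : ℝ) (f : ℝ → ℝ) : ℝ → ℝ :=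
  fun x => u x * ∫ t in x..b, v t * f t

/-- `t_{(p)} = |t|^{p-1} sgn t`. -/
noncomputable def powSgn (p t : ℝ) : ℝ := |t| ^ (p - 1) * Real.sign t

/-- The `L_p` norm of a function on `[a,b]`. -/
noncomputable def funLpNorm (p a b : ℝ) (f : ℝ → ℝ) : ℝ :=
  (∫ t in a..b, |f t| ^ p) ^ (1 / p)

/-- A spectral triple `(g, f, λ)` : `g = Tf`, `f_{(p)} = λ T*(g_{(q)})` and `‖f‖_p = 1`. -/
def IsSpectralTriple (u v : ℝ → ℝ) (a b p q : ℝ) (g f : ℝ → ℝ) (lam : ℝ) : Prop :=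
  (∀ x ∈ Set.Icc a b, g x = hardyT u v a f x) ∧
  (∀ x ∈ Set.Icc a b, powSgn p (f x) = lam * hardyTstar u v b (fun y => powSgn q (g y)) x) ∧
  funLpNorm p a b f = 1

/-- `Z(g)`: the number of distinct zeros of `g` in the open interval `(a,b)`. -/
noncomputable def numZeros (a b : ℝ) (g : ℝ → ℝ) : ℕ∞ :=
  {x ∈ Set.Ioo a b | g x = 0}.encard

/-- `P(f)`: the number of sign changes of `f` in the open interval `(a,b)`. -/
noncomputable def numSignChanges (a b : ℝ) (f : ℝ → ℝ) : ℕ∞ :=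
  ⨆ n ∈ {n : ℕ | ∃ x : Fin (n + 1) → ℝ, StrictMono x ∧ (∀ i, x i ∈ Set.Ioo a b) ∧
      ∀ i : Fin n, f (x i.castSucc) * f (x i.succ) < 0}, (n : ℕ∞)

/-- The set `sp_n(T,p,q)` of spectral numbers whose spectral function has `n` zeros. -/
def spSet (u v : ℝ → ℝ) (a b p q : ℝ) (n : ℕ) : Set ℝ :=
  {lam | ∃ g f, IsSpectralTriple u v a b p q g f lam ∧ numZeros a b g = (n : ℕ∞)}

/-- The Kolmogorov width `d_n(T)`. -/
noncomputable def kolmogorovWidth (u v : ℝ → ℝ) (a b p q : ℝ) (n : ℕ) : ℝ :=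
  ⨅ φ : Fin n → (ℝ → ℝ), ⨆ f ∈ {f : ℝ → ℝ | funLpNorm p a b f ≤ 1},
    ⨅ c : Fin n → ℝ, funLpNorm q a b (fun x => hardyT u v a f x - ∑ i, c i * φ i x)

/-- The Bernstein width `b_n(T)`. -/
noncomputable def bernsteinWidth (u v : ℝ → ℝ) (a b p q : ℝ) (n : ℕ) : ℝ :=
  ⨆ φ ∈ {φ : Fin (n + 1) → (ℝ → ℝ) |
      LinearIndependent ℝ (fun i => hardyT u v a (φ i))},
    ⨅ c ∈ {c : Fin (n + 1) → ℝ | c ≠ 0},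
      funLpNorm q a b (hardyT u v a (fun x => ∑ i, c i * φ i x)) /
        funLpNorm p a b (fun x => ∑ i, c i * φ i x)

/-- The approximation number `a_n(T)`: distance to linear maps of rank at most `n-1`. -/
noncomputable def approxNumber (u v : ℝ → ℝ) (a b p q : ℝ) (n : ℕ) : ℝ :=
  ⨅ F ∈ {F : (ℝ → ℝ) →ₗ[ℝ] (ℝ → ℝ) |
      Module.rank ℝ (LinearMap.range F) ≤ ((n - 1 : ℕ) : Cardinal)},
    ⨆ f ∈ {f : ℝ → ℝ | funLpNorm p a b f ≤ 1},
      funLpNorm q a b (fun x => hardyT u v a f x - F f x)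

/-- The constant `c_{pq}`, with the Beta function expressed via the Gamma function. -/
noncomputable def cpq (p p' q : ℝ) : ℝ :=
  (p' ^ (1 / q) * q ^ (1 / p') * (p' + q) ^ (1 / p - 1 / q)) /
    (2 * (Real.Gamma (1 / q) * Real.Gamma (1 / p') / Real.Gamma (1 / q + 1 / p')))

open Filter Metric BoundedContinuousFunction
open scoped ENNReal

namespace ContinuousMap

variable {K 𝕜 E F : Type*} [TopologicalSpace K] [CompactSpace K] [NontriviallyNormedField 𝕜]
  [NormedAddCommGroup E] [NormedSpace 𝕜 E] [NormedAddCommGroup F] [NormedSpace 𝕜 F]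

lemma norm_apply_apply_le (φ : C(K, E →L[𝕜] F)) (x : K) (e : E) : ‖φ x e‖ ≤ ‖φ‖ * ‖e‖ :=
  ((φ x).le_opNorm e).trans (mul_le_mul_of_nonneg_right (φ.norm_coe_le_norm x) (norm_nonneg e))

noncomputable def flipCLM (φ : C(K, E →L[𝕜] F)) : E →L[𝕜] K →ᵇ F :=
  LinearMap.mkContinuous
    { toFun e := mkOfCompact ⟨fun x => φ x e, φ.continuous.clm_apply continuous_const⟩
      map_add' e₁ e₂ := by ext; simp
      map_smul' c e := by ext; simp }
    ‖φ‖ fun e => (BoundedContinuousFunction.norm_le (by positivity)).2 (φ.norm_apply_apply_le · e)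

@[simp]
lemma flipCLM_apply (φ : C(K, E →L[𝕜] F)) (e : E) (x : K) : φ.flipCLM e x = φ x e := rfl

/-- Arzelà–Ascoli: the images of the unit ball share the modulus of continuity of `φ`. -/
theorem isCompactOperator_flipCLM [ProperSpace F] (φ : C(K, E →L[𝕜] F)) :
    IsCompactOperator φ.flipCLM := by
  apply (isCompactOperator_iff_isCompact_closure_image_closedBall
    (φ.flipCLM : E →ₗ[𝕜] K →ᵇ F) one_pos).mpr
  refine arzela_ascoli (closedBall 0 ‖φ‖) (isCompact_closedBall _ _) _ ?_ fun x₀ => ?_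
  · rintro _ x ⟨e, he, rfl⟩
    rw [mem_closedBall_zero_iff] at he ⊢
    simpa using (φ.norm_apply_apply_le x e).trans (mul_le_of_le_one_right (by positivity) he)
  · refine Metric.equicontinuousAt_of_continuity_modulus (fun x => ‖φ x₀ - φ x‖) ?_ _
      (Eventually.of_forall ?_)
    · simpa using ((φ.continuous.tendsto x₀).const_sub (φ x₀)).norm
    · rintro x ⟨_, e, he, rfl⟩
      rw [mem_closedBall_zero_iff] at he
      simpa [dist_eq_norm] using ((φ x₀ - φ x).le_opNorm e).trans
        (mul_le_of_le_one_right (norm_nonneg _) he)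

end ContinuousMap

section IndicatorIoc

variable {E : Type*} [NormedAddCommGroup E] {u : ℝ → E}

lemma norm_indicator_Ioc_sub_indicator_Ioc_le (a x y t : ℝ) :
    ‖(Ioc a y).indicator u t - (Ioc a x).indicator u t‖ ≤ ‖(uIoc x y).indicator u t‖ := by
  simp only [Set.indicator, mem_Ioc, mem_uIoc]
  split_ifs <;> first | simp; done | grind

variable {s : Set ℝ} {r : ℝ≥0∞} [Fact (1 ≤ r)]

lemma MeasureTheory.MemLp.continuous_toLp_indicator_Ioc (hu : MemLp u r (volume.restrict s))
    (hr : r ≠ ∞) (a : ℝ) :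
    Continuous fun x => (hu.indicator (measurableSet_Ioc (a := a) (b := x))).toLp _ := by
  refine Metric.continuous_iff.2 fun x ε hε => ?_
  obtain ⟨δ, hδ, hsmall⟩ := hu.eLpNorm_indicator_le Fact.out hr (half_pos hε)
  refine ⟨δ, hδ, fun y hy => ?_⟩
  have hμ : volume.restrict s (uIoc x y) ≤ ENNReal.ofReal δ := by
    refine (Measure.restrict_apply_le _ _).trans ?_
    rw [Real.volume_uIoc, ← Real.dist_eq]
    exact ENNReal.ofReal_le_ofReal hy.le
  rw [dist_eq_norm, ← MemLp.toLp_sub, Lp.norm_toLp]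
  calc (eLpNorm ((Ioc a y).indicator u - (Ioc a x).indicator u) r (volume.restrict s)).toReal
      ≤ (eLpNorm ((uIoc x y).indicator u) r (volume.restrict s)).toReal :=
        ENNReal.toReal_mono (hu.indicator measurableSet_uIoc).eLpNorm_ne_top
          (eLpNorm_mono fun t => norm_indicator_Ioc_sub_indicator_Ioc_le a x y t)
    _ ≤ ε / 2 := ENNReal.toReal_le_of_le_ofReal (by positivity) (hsmall _ measurableSet_uIoc hμ)
    _ < ε := half_lt_self hε

end IndicatorIoc

lemma integral_indicator_Ioc_mul_eq_intervalIntegral {a x : ℝ} {s : Set ℝ} (hax : a ≤ x)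
    (hs : Ioc a x ⊆ s) (u f : ℝ → ℝ) :
    ∫ t, (Ioc a x).indicator u t * f t ∂volume.restrict s = ∫ t in a..x, f t * u t := by
  simp_rw [← indicator_mul_left, integral_indicator measurableSet_Ioc,
    Measure.restrict_restrict measurableSet_Ioc, inter_eq_left.2 hs,
    intervalIntegral.integral_of_le hax, mul_comm]

section Hardy

variable {a b : ℝ} {P P' Q : ℝ≥0∞} [Fact (1 ≤ P)] [Fact (1 ≤ P')] [Fact (1 ≤ Q)]
  [P'.HolderConjugate P] {u v : ℝ → ℝ}

noncomputable def hardyFunctional (hu : MemLp u P' (volume.restrict (Icc a b))) (hP' : P' ≠ ∞) :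
    C(Icc a b, Lp ℝ P (volume.restrict (Icc a b)) →L[ℝ] ℝ) where
  toFun x := (ContinuousLinearMap.mul ℝ ℝ).lpPairing _ P' P
    ((hu.indicator (measurableSet_Ioc (a := a) (b := x))).toLp _)
  continuous_toFun := (ContinuousLinearMap.continuous _).comp
    ((hu.continuous_toLp_indicator_Ioc hP' a).comp continuous_subtype_val)

lemma hardyFunctional_apply (hu : MemLp u P' (volume.restrict (Icc a b))) (hP' : P' ≠ ∞)
    (x : Icc a b) (f : Lp ℝ P (volume.restrict (Icc a b))) :
    hardyFunctional hu hP' x f = ∫ t in a..x, f t * u t := by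
  rw [hardyFunctional, ContinuousMap.coe_mk, ContinuousLinearMap.lpPairing_eq_integral,
    ← integral_indicator_Ioc_mul_eq_intervalIntegral x.2.1 (Ioc_subset_Icc_self.trans
      (Icc_subset_Icc_right x.2.2))]
  refine integral_congr_ae ?_
  filter_upwards [(hu.indicator (measurableSet_Ioc (a := a) (b := x))).coeFn_toLp] with t ht
  simp [ht]

noncomputable def weightedIccExtend (hab : a ≤ b) (hv : MemLp v Q (volume.restrict (Icc a b))) :
    (Icc a b →ᵇ ℝ) →L[ℝ] Lp ℝ Q (volume.restrict (Icc a b)) :=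
  (ContinuousLinearMap.mul ℝ ℝ).holderL _ Q ∞ Q (hv.toLp v) ∘L
    BoundedContinuousFunction.toLp ∞ _ ℝ ∘L
    compContinuousCLM ℝ ℝ ⟨projIcc a b hab, continuous_projIcc⟩

lemma weightedIccExtend_ae_eq (hab : a ≤ b) (hv : MemLp v Q (volume.restrict (Icc a b)))
    (g : Icc a b →ᵇ ℝ) :
    weightedIccExtend hab hv g =ᵐ[volume.restrict (Icc a b)]
      fun x => v x * IccExtend hab g x := by
  set g' := g.compContinuous ⟨projIcc a b hab, continuous_projIcc⟩
  filter_upwards [(ContinuousLinearMap.mul ℝ ℝ).coeFn_holder (r := Q) (hv.toLp v)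
      (toLp ∞ _ ℝ g'), hv.coeFn_toLp, g'.coeFn_toLp ∞ _ ℝ] with x hholder hv_eq hg'
  rw [weightedIccExtend, ContinuousLinearMap.comp_apply, ContinuousLinearMap.comp_apply,
    compContinuousCLM_apply, ContinuousLinearMap.holderL_apply_apply, hholder, hg', hv_eq]
  rfl

noncomputable def hardyOperator (hab : a ≤ b) (hu : MemLp u P' (volume.restrict (Icc a b)))
    (hv : MemLp v Q (volume.restrict (Icc a b))) (hP' : P' ≠ ∞) :
    Lp ℝ P (volume.restrict (Icc a b)) →L[ℝ] Lp ℝ Q (volume.restrict (Icc a b)) :=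
  weightedIccExtend hab hv ∘L (hardyFunctional hu hP').flipCLM

lemma isCompactOperator_hardyOperator (hab : a ≤ b) (hu : MemLp u P' (volume.restrict (Icc a b)))
    (hv : MemLp v Q (volume.restrict (Icc a b))) (hP' : P' ≠ ∞) :
    IsCompactOperator (hardyOperator (P := P) hab hu hv hP') := by
  rw [hardyOperator, ContinuousLinearMap.coe_comp]
  exact (hardyFunctional hu hP').isCompactOperator_flipCLM.clm_comp _

lemma hardyOperator_ae_eq (hab : a ≤ b) (hu : MemLp u P' (volume.restrict (Icc a b)))
    (hv : MemLp v Q (volume.restrict (Icc a b))) (hP' : P' ≠ ∞)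
    (f : Lp ℝ P (volume.restrict (Icc a b))) :
    hardyOperator hab hu hv hP' f =ᵐ[volume.restrict (Icc a b)]
      fun x => v x * ∫ t in a..x, f t * u t := by
  filter_upwards [weightedIccExtend_ae_eq hab hv ((hardyFunctional hu hP').flipCLM f),
    ae_restrict_mem measurableSet_Icc] with x hx hxI
  rw [hardyOperator, ContinuousLinearMap.comp_apply, hx, IccExtend_of_mem hab _ hxI,
    ContinuousMap.flipCLM_apply, hardyFunctional_apply]

end Hardy

theorem hardy_operator_compact_general
    (a b p q p' : ℝ) (u v : ℝ → ℝ)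
    [Fact (1 ≤ ENNReal.ofReal p)] [Fact (1 ≤ ENNReal.ofReal q)]
    (hab : a < b) (hp : 1 < p)
    (hp' : 1 / p' = 1 - 1 / p)
    (hu' : MemLp u (ENNReal.ofReal p') (volume.restrict (Set.Icc a b)))
    (hv' : MemLp v (ENNReal.ofReal q) (volume.restrict (Set.Icc a b))) :
    ∃ T : Lp ℝ (ENNReal.ofReal p) (volume.restrict (Set.Icc a b)) →L[ℝ]
        Lp ℝ (ENNReal.ofReal q) (volume.restrict (Set.Icc a b)),
      IsCompactOperator T ∧
      ∀ f : Lp ℝ (ENNReal.ofReal p) (volume.restrict (Set.Icc a b)),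
        ∀ᵐ x ∂(volume.restrict (Set.Icc a b)),
          (T f : ℝ → ℝ) x = v x * ∫ t in a..x, (f : ℝ → ℝ) t * u t := by
  have hpp' : p.HolderConjugate p' :=
    Real.holderConjugate_iff.2 ⟨hp, by simp only [one_div] at hp'; linarith⟩
  have := hpp'.symm.ennrealOfReal
  have : Fact (1 ≤ ENNReal.ofReal p') := ⟨ENNReal.HolderConjugate.one_le _ (ENNReal.ofReal p)⟩
  exact ⟨hardyOperator hab.le hu' hv' ENNReal.ofReal_ne_top,
    isCompactOperator_hardyOperator hab.le hu' hv' ENNReal.ofReal_ne_top,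
    hardyOperator_ae_eq hab.le hu' hv' ENNReal.ofReal_ne_top⟩

theorem hardy_operator_compact
    (a b p q p' : ℝ) (u v : ℝ → ℝ)
    [Fact (1 ≤ ENNReal.ofReal p)] [Fact (1 ≤ ENNReal.ofReal q)]
    (hab : a < b) (hp : 1 < p) (hq : 1 < q)
    (hp' : 1 / p' = 1 - 1 / p)
    (hu : ∀ x ∈ Set.Icc a b, 0 < u x) (hv : ∀ x ∈ Set.Icc a b, 0 < v x)
    (hu' : MemLp u (ENNReal.ofReal p') (volume.restrict (Set.Icc a b)))
    (hv' : MemLp v (ENNReal.ofReal q) (volume.restrict (Set.Icc a b))) :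
    ∃ T : Lp ℝ (ENNReal.ofReal p) (volume.restrict (Set.Icc a b)) →L[ℝ]
        Lp ℝ (ENNReal.ofReal q) (volume.restrict (Set.Icc a b)),
      IsCompactOperator T ∧
      ∀ f : Lp ℝ (ENNReal.ofReal p) (volume.restrict (Set.Icc a b)),
        ∀ᵐ x ∂(volume.restrict (Set.Icc a b)),
          (T f : ℝ → ℝ) x = v x * ∫ t in a..x, (f : ℝ → ℝ) t * u t :=
  hardy_operator_compact_general a b p q p' u v hab hp hp' hu' hv'
end

section
/- If f∈L_p(I) and λ∈ℝ satisfy the nonlinear equation f_{(p)} = λ T*((Tf)_{(q)}), then s := (Tf)_{(q)} and λ* := λ_{(p')} satisfy the dual equation s_{(q')} = λ* T((T*s)_{(p')}). -/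
open MeasureTheory Set

/-!
The maps `t ↦ t_{(p)}` and `t ↦ t_{(p')}` are multiplicative and mutually inverse, so the primal
equation can be solved pointwise for `f`: `f = λ_{(p')} (T*s)_{(p')}`. Applying `T` gives
`Tf = λ_{(p')} T((T*s)_{(p')})`, and `Tf = s_{(q')}` because `t ↦ t_{(q')}` inverts `t ↦ t_{(q)}`.
-/

namespace Real

lemma sign_mul (a b : ℝ) : sign (a * b) = sign a * sign b := by
  rcases lt_trichotomy a 0 with ha | ha | ha <;> rcases lt_trichotomy b 0 with hb | hb | hb <;>
    simp [ha, hb, sign_of_pos, sign_of_neg, mul_pos_of_neg_of_neg,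
      mul_neg_of_pos_of_neg, mul_neg_of_neg_of_pos]

lemma abs_mul_sign (a : ℝ) : |a| * sign a = a := by
  rcases lt_trichotomy a 0 with ha | ha | ha <;>
    simp [ha, sign_of_pos, sign_of_neg, abs_of_pos, abs_of_neg]

lemma sub_one_mul_sub_one_eq_one_of_one_div_eq {p q : ℝ} (hp : 1 < p) (h : 1 / q = 1 - 1 / p) :
    (p - 1) * (q - 1) = 1 := by
  have hpq : p.HolderConjugate q :=
    holderConjugate_iff.2 ⟨hp, by simp only [one_div] at h; linarith⟩
  linear_combination hpq.mul_eq_add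

end Real

section powSgn

lemma powSgn_zero (r : ℝ) : powSgn r 0 = 0 := by
  simp [powSgn]

lemma powSgn_of_pos (r : ℝ) {x : ℝ} (hx : 0 < x) : powSgn r x = x ^ (r - 1) := by
  rw [powSgn, abs_of_pos hx, Real.sign_of_pos hx, mul_one]

lemma powSgn_sign (r t : ℝ) : powSgn r (Real.sign t) = Real.sign t := by
  rcases Real.sign_apply_eq t with h | h | h <;> simp [h, powSgn, Real.sign_of_neg]

lemma powSgn_mul (r a b : ℝ) : powSgn r (a * b) = powSgn r a * powSgn r b := by
  rw [powSgn, powSgn, powSgn, abs_mul, Real.mul_rpow (abs_nonneg a) (abs_nonneg b),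
    Real.sign_mul]
  ring

lemma powSgn_powSgn {p p' : ℝ} (h : (p - 1) * (p' - 1) = 1) (t : ℝ) :
    powSgn p' (powSgn p t) = t := by
  rcases eq_or_ne t 0 with rfl | ht
  · simp [powSgn_zero]
  change powSgn p' (|t| ^ (p - 1) * Real.sign t) = t
  rw [powSgn_mul, powSgn_of_pos _ (Real.rpow_pos_of_pos (abs_pos.2 ht) _),
    powSgn_sign, ← Real.rpow_mul (abs_nonneg t), h, Real.rpow_one, Real.abs_mul_sign]

end powSgn

section hardyT

variable {u v f g : ℝ → ℝ} {a x : ℝ}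

lemma hardyT_const_mul (c : ℝ) : hardyT u v a (fun y => c * f y) x = c * hardyT u v a f x := by
  simp only [hardyT, mul_assoc, intervalIntegral.integral_const_mul]
  ring

lemma hardyT_congr (hax : a ≤ x) (h : EqOn f g (Icc a x)) :
    hardyT u v a f x = hardyT u v a g x := by
  unfold hardyT
  congr 1
  refine intervalIntegral.integral_congr fun y hy => ?_
  rw [uIcc_of_le hax] at hy
  simp only [h hy]

end hardyT

theorem dual_of_primal_equation_general
    (a b p q p' : ℝ) (u v : ℝ → ℝ)
    (hp : 1 < p) (hq : 1 < q)
    (hp' : 1 / p' = 1 - 1 / p)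
    (q' : ℝ) (hq' : 1 / q' = 1 - 1 / q)
    (f : ℝ → ℝ) (lam : ℝ)
    (heq : ∀ x ∈ Set.Icc a b,
      powSgn p (f x) =
        lam * hardyTstar u v b (fun y => powSgn q (hardyT u v a f y)) x) :
    ∀ x ∈ Set.Icc a b,
      powSgn q' (powSgn q (hardyT u v a f x)) =
        powSgn p' lam *
          hardyT u v a
            (fun y => powSgn p'
              (hardyTstar u v b (fun z => powSgn q (hardyT u v a f z)) y)) x := by
  intro x hx
  have hpp' := Real.sub_one_mul_sub_one_eq_one_of_one_div_eq hp hp'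
  have hqq' := Real.sub_one_mul_sub_one_eq_one_of_one_div_eq hq hq'
  rw [powSgn_powSgn hqq', ← hardyT_const_mul]
  refine hardyT_congr hx.1 fun y hy => ?_
  rw [← powSgn_mul, ← heq y ⟨hy.1, hy.2.trans hx.2⟩, powSgn_powSgn hpp']

theorem dual_of_primal_equation
    (a b p q p' : ℝ) (u v : ℝ → ℝ)
    (hab : a < b) (hp : 1 < p) (hq : 1 < q)
    (hp' : 1 / p' = 1 - 1 / p)
    (hu : ∀ x ∈ Set.Icc a b, 0 < u x) (hv : ∀ x ∈ Set.Icc a b, 0 < v x)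
    (hu' : MemLp u (ENNReal.ofReal p') (volume.restrict (Set.Icc a b)))
    (hv' : MemLp v (ENNReal.ofReal q) (volume.restrict (Set.Icc a b)))
    (q' : ℝ) (hq' : 1 / q' = 1 - 1 / q)
    (f : ℝ → ℝ) (lam : ℝ)
    (hf : MemLp f (ENNReal.ofReal p) (volume.restrict (Set.Icc a b)))
    (heq : ∀ x ∈ Set.Icc a b,
      powSgn p (f x) =
        lam * hardyTstar u v b (fun y => powSgn q (hardyT u v a f y)) x) :
    ∀ x ∈ Set.Icc a b,
      powSgn q' (powSgn q (hardyT u v a f x)) =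
        powSgn p' lam *
          hardyT u v a
            (fun y => powSgn p'
              (hardyTstar u v b (fun z => powSgn q (hardyT u v a f z)) y)) x :=
  dual_of_primal_equation_general a b p q p' u v hp hq hp' q' hq' f lam heq
end
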